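/- arXiv:math/0312494 — 6 statements merged into one kernel-verified Lean document; each statement's English description precedes it below -/
import Mathlib

section
/- Let k be a field of characteristic 0, A an associative unital k-algebra, n ≥ 1, and K a subgroup of the symmetric group S_n. Consider the n-th tensor power algebra A^{⊗n} (multiplication defined slotwise on simple tensors), with K acting by permuting tensor factors: σ•(a_1⊗⋯⊗a_n) = a_{σ⁻¹(1)}⊗⋯⊗a_{σ⁻¹(n)}. Let s(x) = (1/|K|) Σ_{σ∈K} σ•x be the averaging map on A^{⊗n}. Then for every m ≥ 1 and all elements a_{ij} ∈ A (1 ≤ i ≤ m, 1 ≤ j ≤ n): ∏_{i=1}^{m} s(a_{i1}⊗a_{i2}⊗⋯⊗a_{in}) = |K|^{-(m−1)} Σ_{(σ_2,…,σ_m)∈K^{m−1}} s( ⊗_{j=1}^{n} ( a_{1j} · a_{2 σ_2⁻¹(j)} · a_{3 σ_3⁻¹(j)} ⋯ a_{m σ_m⁻¹(j)} ) ), where the product inside each tensor slot is taken in A in the order i = 1, 2, …, m. -/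
open Finset
open scoped TensorProduct

section Aux

variable {k R : Type*} [Field k] [Ring R] [Algebra k R]

lemma aux_list_smul : ∀ (M : ℕ) (r : k) (x : Fin M → R),
    (List.ofFn fun i => r • x i).prod = r ^ M • (List.ofFn x).prod := by
  intro M
  induction M with
  | zero => simp
  | succ M ih =>
    intro r x
    rw [List.ofFn_succ, List.ofFn_succ, List.prod_cons, List.prod_cons,
      ih r (fun i => x i.succ), smul_mul_smul_comm, pow_succ']

lemma aux_list_sum {ι : Type*} [Fintype ι] : ∀ (M : ℕ) (F : Fin M → ι → R),
    (List.ofFn fun i => ∑ x : ι, F i x).prod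
      = ∑ g : Fin M → ι, (List.ofFn fun i => F i (g i)).prod := by
  intro M
  induction M with
  | zero => simp
  | succ M ih =>
    intro F
    rw [List.ofFn_succ, List.prod_cons, ih (fun i => F i.succ),
      Finset.sum_mul_sum]
    rw [← Equiv.sum_comp (Fin.consEquiv (fun _ : Fin (M + 1) => ι))
      (fun g => (List.ofFn fun i => F i (g i)).prod), Fintype.sum_prod_type]
    refine Finset.sum_congr rfl fun x _ => Finset.sum_congr rfl fun g _ => ?_
    rw [List.ofFn_succ, List.prod_cons]
    simp [Fin.consEquiv]

end Aux

lemma aux_tprod_prod (k A : Type*) [Field k] [Ring A] [Algebra k A] (n : ℕ) :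
    ∀ (M : ℕ) (b : Fin M → Fin n → A),
    (List.ofFn fun i => (PiTensorProduct.tprod k (b i) : ⨂[k] _ : Fin n, A)).prod
      = PiTensorProduct.tprod k (fun j => (List.ofFn fun i => b i j).prod) := by
  intro M
  induction M with
  | zero => simp [PiTensorProduct.one_def, Pi.one_def]
  | succ M ih =>
    intro b
    rw [List.ofFn_succ, List.prod_cons, ih (fun i => b i.succ),
      PiTensorProduct.tprod_mul_tprod]
    congr 1
    funext j
    rw [List.ofFn_succ, List.prod_cons]
    rfl

/-- The general multiplication rule for the Polya functor algebra `P_K(A) = (A^{⊗n})/K`,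
stated on invariants: `s` is the averaging over `K ≤ S_n` acting on the `n`-th tensor power
of an algebra `A` by permuting the tensor factors (`σ` sends `a_1 ⊗ ⋯ ⊗ a_n` to
`a_{σ⁻¹(1)} ⊗ ⋯ ⊗ a_{σ⁻¹(n)}`, i.e. it is `PiTensorProduct.reindex` along `σ`).  The ordered
product of `m ≥ 1` symmetrized simple tensors (here `m+1` factors indexed by `Fin (m+1)`)
is `|K|^{-(m-1)}` times the sum over `(σ_2,…,σ_m) ∈ K^{m-1}` (with `σ_1 = id`) of the
symmetrization of the slotwise ordered products `∏_i a_{i σ_i⁻¹(j)}`. -/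
theorem statement2 (k A : Type*) [Field k] [CharZero k] [Ring A] [Algebra k A]
    (n : ℕ) (K : Subgroup (Equiv.Perm (Fin n))) [Fintype K]
    (s : (⨂[k] _ : Fin n, A) → (⨂[k] _ : Fin n, A))
    (hs : ∀ x, s x = (Fintype.card K : k)⁻¹ •
      ∑ σ : K, (PiTensorProduct.reindex k (fun _ : Fin n => A)
        (σ : Equiv.Perm (Fin n))) x)
    (m : ℕ) (a : Fin (m + 1) → Fin n → A) :
    (List.ofFn fun i : Fin (m + 1) => s (PiTensorProduct.tprod k (a i))).prod =
      ((Fintype.card K : k)⁻¹) ^ m •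
        ∑ σ ∈ Finset.univ.filter (fun σ : Fin (m + 1) → K => σ 0 = 1),
          s (PiTensorProduct.tprod k fun j : Fin n =>
            (List.ofFn fun i : Fin (m + 1) =>
              a i (((σ i : Equiv.Perm (Fin n)))⁻¹ j)).prod) := by
  set c : k := (Fintype.card K : k) with hc
  have hc0 : c ≠ 0 := Nat.cast_ne_zero.mpr Fintype.card_ne_zero
  -- F σ is the "slotwise-ordered-product" simple tensor
  set F : (Fin (m + 1) → K) → (⨂[k] _ : Fin n, A) := fun σ =>
    PiTensorProduct.tprod k fun j : Fin n =>
      (List.ofFn fun i : Fin (m + 1) => a i (((σ i : Equiv.Perm (Fin n)))⁻¹ j)).prod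
    with hF
  -- expand LHS
  have step1 : (List.ofFn fun i : Fin (m + 1) => s (PiTensorProduct.tprod k (a i))).prod
      = c⁻¹ ^ (m + 1) • ∑ σ : Fin (m + 1) → K, F σ := by
    have : (fun i : Fin (m + 1) => s (PiTensorProduct.tprod k (a i)))
        = fun i => c⁻¹ • ∑ σ : K, PiTensorProduct.tprod k
            (fun j => a i (((σ : Equiv.Perm (Fin n)))⁻¹ j)) := by
      funext i
      rw [hs]
      congr 1
      refine Finset.sum_congr rfl fun σ _ => ?_
      rw [PiTensorProduct.reindex_tprod]
      rfl
    rw [this, aux_list_smul, aux_list_sum]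
    congr 1
    refine Finset.sum_congr rfl fun σ _ => ?_
    rw [hF, aux_tprod_prod]
  -- reparametrize the sum
  have step2 : ∑ σ : Fin (m + 1) → K, F σ
      = ∑ π : K, ∑ τ ∈ Finset.univ.filter (fun τ : Fin (m + 1) → K => τ 0 = 1),
          F (fun i => π * τ i) := by
    rw [← Finset.sum_product']
    refine Finset.sum_nbij' (fun σ => (σ 0, fun i => (σ 0)⁻¹ * σ i))
      (fun p => fun i => p.1 * p.2 i) ?_ ?_ ?_ ?_ ?_
    · intro σ _
      simp [Finset.mem_product]
    · intro p _
      simp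
    · intro σ _
      funext i
      simp
    · intro p hp
      simp only [Finset.mem_product, Finset.mem_filter] at hp
      obtain ⟨-, -, h1⟩ := hp
      refine Prod.ext ?_ ?_
      · simp [h1]
      · funext i
        simp [h1]
    · intro σ _
      exact congrArg F (funext fun i => (mul_inv_cancel_left (σ 0) (σ i)).symm)
  -- each inner term: sum over π of a reindexed element is c • s _
  have step3 : ∀ τ : Fin (m + 1) → K,
      ∑ π : K, F (fun i => π * τ i) = c • s (F τ) := by
    intro τ
    rw [hs, smul_smul, mul_inv_cancel₀ hc0, one_smul]
    refine Finset.sum_congr rfl fun π _ => ?_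
    rw [hF]
    rw [PiTensorProduct.reindex_tprod]
    congr 1
  rw [step1, step2, Finset.sum_comm]
  rw [Finset.sum_congr rfl fun τ _ => step3 τ, ← Finset.smul_sum, smul_smul]
  congr 1
  rw [pow_succ, mul_assoc, inv_mul_cancel₀ hc0, mul_one]
end

section
/- Fix n, m ≥ 1 and let R = ℚ[x_{i,j} : 1 ≤ i ≤ n, 1 ≤ j ≤ m]. Let the hyperoctahedral group W = {±1}^n ⋊ S_n act on R by (t,σ)•x_{i,j} = t_i · x_{σ(i),j}, and let s_W(f) = (1/(2^n n!)) Σ_{w∈W} w•f be the corresponding averaging operator. For exponent matrices A, B : Fin n × Fin m → ℕ such that for every i the row sums Σ_j A(i,j) and Σ_j B(i,j) are even, one has s_W(X^A)·s_W(X^B) = (1/n!) Σ_{σ∈S_n} s_W(X^{A+σ(B)}). -/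
open Finset MvPolynomial

/-- The monomial `X^A = ∏_{i,j} x_{i,j}^{A(i,j)}` in `ℚ[x_{i,j}]`. -/
noncomputable def Xpow (n m : ℕ) (A : Fin n × Fin m → ℕ) :
    MvPolynomial (Fin n × Fin m) ℚ :=
  ∏ p : Fin n × Fin m, (X p) ^ (A p)

/-- The action of an element `(t, σ)` of the hyperoctahedral group `{±1}^n ⋊ S_n` on
`ℚ[x_{i,j}]`, determined by `(t,σ) • x_{i,j} = t_i · x_{σ(i),j}`.  A sign vector
`t ∈ {±1}^n` is encoded as `t : Fin n → Bool`, with `true ↦ -1` and `false ↦ 1`. -/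
noncomputable def hyperAct (n m : ℕ) (t : Fin n → Bool) (σ : Equiv.Perm (Fin n)) :
    MvPolynomial (Fin n × Fin m) ℚ → MvPolynomial (Fin n × Fin m) ℚ :=
  aeval (fun p : Fin n × Fin m =>
    C (if t p.1 then (-1 : ℚ) else 1) * X (σ p.1, p.2))

/-- The averaging operator `s_W(f) = (1/(2^n n!)) Σ_{w ∈ W} w • f` over the
hyperoctahedral group `W = {±1}^n ⋊ S_n`. -/
noncomputable def symmetrizeB (n m : ℕ) (f : MvPolynomial (Fin n × Fin m) ℚ) :
    MvPolynomial (Fin n × Fin m) ℚ :=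
  ((2 ^ n * n.factorial : ℚ))⁻¹ •
    ∑ t : Fin n → Bool, ∑ σ : Equiv.Perm (Fin n), hyperAct n m t σ f

lemma Xpow_add (n m : ℕ) (A B : Fin n × Fin m → ℕ) :
    Xpow n m (A + B) = Xpow n m A * Xpow n m B := by
  simp [Xpow, pow_add, Finset.prod_mul_distrib]

lemma hyperAct_Xpow (n m : ℕ) (t : Fin n → Bool) (σ : Equiv.Perm (Fin n))
    (A : Fin n × Fin m → ℕ) (hA : ∀ i : Fin n, Even (∑ j : Fin m, A (i, j))) :
    hyperAct n m t σ (Xpow n m A) = Xpow n m (fun p => A (σ⁻¹ p.1, p.2)) := by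
  unfold hyperAct Xpow
  rw [map_prod]
  have : ∀ p : Fin n × Fin m,
      (aeval (fun p : Fin n × Fin m =>
        C (if t p.1 then (-1 : ℚ) else 1) * X (σ p.1, p.2))) ((X p : MvPolynomial (Fin n × Fin m) ℚ) ^ (A p)) =
      C ((if t p.1 then (-1 : ℚ) else 1) ^ A p) * X (σ p.1, p.2) ^ A p := by
    intro p
    rw [map_pow, aeval_X, mul_pow, ← C_pow]
  rw [Finset.prod_congr rfl fun p _ => this p, Finset.prod_mul_distrib]
  have hC : (∏ p : Fin n × Fin m, C ((if t p.1 then (-1 : ℚ) else 1) ^ A p) : MvPolynomial (Fin n × Fin m) ℚ) = 1 := by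
    rw [← map_prod]
    rw [Fintype.prod_prod_type]
    have : ∀ i : Fin n, (∏ j : Fin m, (if t i then (-1 : ℚ) else 1) ^ A (i, j)) = 1 := by
      intro i
      rw [Finset.prod_pow_eq_pow_sum]
      cases h : t i <;> simp [h, (hA i).neg_one_pow]
    rw [Finset.prod_congr rfl fun i _ => this i]
    simp
  rw [hC, one_mul]
  exact Fintype.prod_equiv (σ.prodCongr (Equiv.refl (Fin m)))
    (fun p => X (σ p.1, p.2) ^ A p) (fun q => X q ^ A (σ⁻¹ q.1, q.2))
    (fun p => by cases p with | mk a b => simp)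

lemma symmetrizeB_Xpow (n m : ℕ) (A : Fin n × Fin m → ℕ)
    (hA : ∀ i : Fin n, Even (∑ j : Fin m, A (i, j))) :
    symmetrizeB n m (Xpow n m A) =
      ((n.factorial : ℚ))⁻¹ • ∑ σ : Equiv.Perm (Fin n),
        Xpow n m (fun p => A (σ⁻¹ p.1, p.2)) := by
  unfold symmetrizeB
  have : ∀ t : Fin n → Bool, ∑ σ : Equiv.Perm (Fin n), hyperAct n m t σ (Xpow n m A)
      = ∑ σ : Equiv.Perm (Fin n), Xpow n m (fun p => A (σ⁻¹ p.1, p.2)) := by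
    intro t
    exact Finset.sum_congr rfl fun σ _ => hyperAct_Xpow n m t σ A hA
  rw [Finset.sum_congr rfl fun t _ => this t, Finset.sum_const]
  simp only [Finset.card_univ, Fintype.card_fun, Fintype.card_bool, Fintype.card_fin]
  rw [← Nat.cast_smul_eq_nsmul ℚ, smul_smul]
  congr 1
  have h2 : (2 : ℚ) ^ n ≠ 0 := by positivity
  push_cast
  field_simp

/-- Product rule for classical symmetric functions of type `B_n`: if all row sums of the
exponent matrices `A` and `B` are even, then
`s_W(X^A) · s_W(X^B) = (1/n!) Σ_{σ ∈ S_n} s_W(X^{A + σ(B)})`. -/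
theorem statement4 (n m : ℕ) (hn : 1 ≤ n) (hm : 1 ≤ m)
    (A B : Fin n × Fin m → ℕ)
    (hA : ∀ i : Fin n, Even (∑ j : Fin m, A (i, j)))
    (hB : ∀ i : Fin n, Even (∑ j : Fin m, B (i, j))) :
    symmetrizeB n m (Xpow n m A) * symmetrizeB n m (Xpow n m B) =
      ((n.factorial : ℚ))⁻¹ • ∑ σ : Equiv.Perm (Fin n),
        symmetrizeB n m (Xpow n m (A + fun p : Fin n × Fin m => B (σ⁻¹ p.1, p.2))) := by
  have hAB : ∀ σ : Equiv.Perm (Fin n), ∀ i : Fin n,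
      Even (∑ j : Fin m, (A + fun p : Fin n × Fin m => B (σ⁻¹ p.1, p.2)) (i, j)) := by
    intro σ i
    simp only [Pi.add_apply]
    rw [Finset.sum_add_distrib]
    exact (hA i).add (hB (σ⁻¹ i))
  have hR : ∀ σ : Equiv.Perm (Fin n),
      symmetrizeB n m (Xpow n m (A + fun p : Fin n × Fin m => B (σ⁻¹ p.1, p.2))) =
      ((n.factorial : ℚ))⁻¹ • ∑ τ : Equiv.Perm (Fin n),
        Xpow n m (fun p => A (τ⁻¹ p.1, p.2) + B (σ⁻¹ (τ⁻¹ p.1), p.2)) := by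
    intro σ
    rw [symmetrizeB_Xpow n m _ (hAB σ)]
    rfl
  rw [symmetrizeB_Xpow n m A hA, symmetrizeB_Xpow n m B hB,
    Finset.sum_congr rfl fun σ _ => hR σ, smul_mul_smul_comm, ← Finset.smul_sum, smul_smul]
  congr 1
  rw [Finset.sum_mul_sum]
  conv_rhs => rw [Finset.sum_comm]
  refine Finset.sum_congr rfl fun τ _ => ?_
  refine (Fintype.sum_equiv (Equiv.mulLeft τ)
    (fun σ => Xpow n m (fun p => A (τ⁻¹ p.1, p.2) + B (σ⁻¹ (τ⁻¹ p.1), p.2)))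
    (fun σ => Xpow n m (fun p => A (τ⁻¹ p.1, p.2)) *
      Xpow n m (fun p => B (σ⁻¹ p.1, p.2))) ?_).symm
  intro σ
  simp only [Equiv.coe_mulLeft]
  rw [← Xpow_add]
  congr 1
end

section
/- Let k be a field of characteristic 0, V a finite-dimensional k-vector space, n ≥ 1, and K a subgroup of S_n acting on the n-th tensor power V^{⊗n} by permuting tensor factors: σ•(v_1⊗⋯⊗v_n) = v_{σ⁻¹(1)}⊗⋯⊗v_{σ⁻¹(n)}. Then the dimension of the subspace of K-invariants of V^{⊗n} equals (1/|K|) Σ_{τ∈K} (dim V)^{c(τ)}, where c(τ) is the total number of cycles of the permutation τ on {1,…,n} (fixed points counted as cycles of length 1); equivalently, it equals the cycle index polynomial P_K evaluated at (dim V, dim V, …, dim V). -/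
open Finset
open scoped TensorProduct

/-- The submodule of `K`-invariants of the `n`-th tensor power `V^{⊗n}`, where a subgroup
`K ≤ S_n` acts by permuting the tensor factors (via `PiTensorProduct.reindex`). -/
def permInvariants (k V : Type*) [Field k] [AddCommGroup V] [Module k V] (n : ℕ)
    (K : Subgroup (Equiv.Perm (Fin n))) : Submodule k (⨂[k] _ : Fin n, V) where
  carrier := {x | ∀ σ ∈ K, PiTensorProduct.reindex k (fun _ : Fin n => V) σ x = x}
  add_mem' := by
    intro x y hx hy σ hσ
    rw [map_add, hx σ hσ, hy σ hσ]
  zero_mem' := by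
    intro σ hσ
    exact map_zero _
  smul_mem' := by
    intro c x hx σ hσ
    rw [map_smul, hx σ hσ]

/-- The total number of cycles of a permutation `τ`, fixed points counted as cycles of
length 1: the number of nontrivial cycles (`τ.cycleType.card`) plus the number of fixed
points. -/
def cyclesCount {n : ℕ} (τ : Equiv.Perm (Fin n)) : ℕ :=
  τ.cycleType.card + (Finset.univ.filter fun x : Fin n => τ x = x).card

/-! The averaging operator `|K|⁻¹ Σ_{τ ∈ K} τ` is a projection onto the `K`-invariants, so in
characteristic zero the dimension of the invariants is its trace, the average of the characters.
Each `τ` permutes the product basis `e_{g 1} ⊗ ⋯ ⊗ e_{g n}` (`g : Fin n → Fin (dim V)`) by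
`g ↦ g ∘ τ⁻¹`, so its trace is the number of `g` constant on the cycles of `τ`, which is
`(dim V) ^ c(τ)`. -/

open Module

namespace Equiv.Perm

variable {α β : Type*}

theorem sameCycle_le_ker_iff [Finite α] {σ : Perm α} {f : α → β} :
    SameCycle.setoid σ ≤ Setoid.ker f ↔ ∀ x, f (σ x) = f x := by
  refine ⟨fun h x => h (sameCycle_apply_left.2 SameCycle.rfl), fun h x y hxy => ?_⟩
  obtain ⟨i, rfl⟩ := hxy.exists_nat_pow_eq
  clear hxy
  induction i generalizing x with
  | zero => rfl
  | succ i ih => rw [Setoid.ker_def, pow_succ, mul_apply, ← ih, h]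

variable [Fintype α] [DecidableEq α]

/-- `σ.cycleOf x` is `1` at every fixed point `x`, so fixed points are labelled by themselves. -/
def cycleLabel (σ : Perm α) (x : α) : {x // σ x = x} ⊕ σ.cycleFactorsFinset :=
  if h : σ x = x then .inl ⟨x, h⟩
  else .inr ⟨σ.cycleOf x, cycleOf_mem_cycleFactorsFinset_iff.2 (mem_support.2 h)⟩

theorem cycleLabel_eq_iff {σ : Perm α} {x y : α} :
    σ.cycleLabel x = σ.cycleLabel y ↔ σ.SameCycle x y := by
  by_cases hx : σ x = x <;> by_cases hy : σ y = y
  · simpa [cycleLabel, hx, hy] using ⟨(· ▸ SameCycle.rfl), (·.eq_of_left hx)⟩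
  · simpa [cycleLabel, hx, hy] using fun h => hy (h.apply_eq_self_iff.1 hx)
  · simpa [cycleLabel, hx, hy] using fun h => hx (h.apply_eq_self_iff.2 hy)
  · simpa [cycleLabel, hx, hy] using
      (sameCycle_iff_cycleOf_eq_of_mem_support (mem_support.2 hx) (mem_support.2 hy)).symm

theorem cycleLabel_surjective (σ : Perm α) : Function.Surjective σ.cycleLabel := by
  rintro (⟨x, hx⟩ | ⟨c, hc⟩)
  · exact ⟨x, by simp [cycleLabel, hx]⟩
  · obtain ⟨x, hx⟩ := (mem_cycleFactorsFinset_iff.1 hc).1.nonempty_support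
    have hσx : σ x ≠ x := mem_support.1 (mem_cycleFactorsFinset_support_le hc hx)
    exact ⟨x, by simp [cycleLabel, hσx, ← cycle_is_cycleOf hx hc]⟩

theorem card_quotient_sameCycle (σ : Perm α) :
    Nat.card (Quotient (SameCycle.setoid σ)) = σ.cycleType.card + #{x | σ x = x} := by
  have hker : SameCycle.setoid σ = Setoid.ker σ.cycleLabel :=
    Setoid.ext fun _ _ => cycleLabel_eq_iff.symm
  rw [hker, Nat.card_congr (Setoid.quotientKerEquivOfSurjective _ σ.cycleLabel_surjective),
    Nat.card_sum, cycleType_def, Multiset.card_map, add_comm]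
  simp [Fintype.card_subtype]

theorem card_filter_invariant_fun [Fintype β] [DecidableEq β] (σ : Perm α) :
    #{f : α → β | ∀ x, f (σ x) = f x} = Fintype.card β ^ (σ.cycleType.card + #{x | σ x = x}) := by
  rw [← Fintype.card_subtype, ← Nat.card_eq_fintype_card,
    Nat.card_congr ((Equiv.subtypeEquivRight fun f => sameCycle_le_ker_iff.symm).trans
      (Setoid.liftEquiv _)), Nat.card_fun, card_quotient_sameCycle, Nat.card_eq_fintype_card]

end Equiv.Perm

theorem LinearMap.trace_eq_card_fixedPoints {R M ι : Type*} [CommRing R] [AddCommGroup M]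
    [Module R M] [Fintype ι] [DecidableEq ι] (b : Basis ι R M) (e : Equiv.Perm ι)
    {f : M →ₗ[R] M} (hf : ∀ i, f (b i) = b (e i)) :
    trace R M f = #{i | e i = i} := by
  rw [trace_eq_matrix_trace R b, Matrix.trace]
  simp [toMatrix_apply, hf, Finsupp.single_apply]

namespace PiTensorProduct

section

variable (R M ι : Type*) [CommSemiring R] [AddCommMonoid M] [Module R M]

noncomputable def permRep : Representation R (Equiv.Perm ι) (⨂[R] _ : ι, M) where
  toFun σ := (reindex R (fun _ => M) σ).toLinearMap
  map_one' := by rw [Equiv.Perm.one_def, reindex_refl]; rfl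
  map_mul' σ τ := by rw [Equiv.Perm.mul_def, ← reindex_trans]; rfl

variable {R M ι}

@[simp]
theorem permRep_apply (σ : Equiv.Perm ι) (x : ⨂[R] _ : ι, M) :
    permRep R M ι σ x = reindex R (fun _ => M) σ x := rfl

end

theorem trace_permRep {R M ι : Type*} [CommRing R] [StrongRankCondition R] [AddCommGroup M]
    [Module R M] [Module.Free R M] [Module.Finite R M] [Fintype ι] [DecidableEq ι]
    (σ : Equiv.Perm ι) :
    LinearMap.trace R _ (permRep R M ι σ) =
      (finrank R M ^ (σ.cycleType.card + #{x | σ x = x}) : ℕ) := by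
  classical
  let b := Free.chooseBasis R M
  rw [LinearMap.trace_eq_card_fixedPoints (Basis.piTensorProduct fun _ : ι => b)
    (σ.arrowCongr (Equiv.refl _)) fun g => by simp [reindex_tprod],
    finrank_eq_card_chooseBasisIndex, ← Equiv.Perm.card_filter_invariant_fun]
  congr 2
  refine filter_congr fun g _ => ?_
  rw [funext_iff, ← σ.forall_congr_right]
  simp [eq_comm]

end PiTensorProduct

theorem statement6_general (k V : Type*) [Field k] [CharZero k] [AddCommGroup V] [Module k V]
    [FiniteDimensional k V] (n : ℕ)
    (K : Subgroup (Equiv.Perm (Fin n))) [Fintype K] :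
    (Module.finrank k (permInvariants k V n K) : ℚ) =
      (Fintype.card K : ℚ)⁻¹ *
        ∑ τ : K, (Module.finrank k V : ℚ) ^ cyclesCount (τ : Equiv.Perm (Fin n)) := by
  let ρ : Representation k K (⨂[k] _ : Fin n, V) :=
    (PiTensorProduct.permRep k V (Fin n)).comp K.subtype
  have hinv : permInvariants k V n K = ρ.invariants := by
    ext x
    simp [permInvariants, ρ]
  have : Invertible (Nat.card K : k) := invertibleOfNonzero (Nat.cast_ne_zero.2 Nat.card_pos.ne')
  have hchar := ρ.card_inv_mul_sum_char_eq_finrank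
  simp only [Representation.character, ρ, MonoidHom.comp_apply, Subgroup.coe_subtype,
    PiTensorProduct.trace_permRep, Nat.cast_pow] at hchar
  rw [hinv, ← Nat.card_eq_fintype_card]
  apply Rat.cast_injective (α := k)
  push_cast [cyclesCount]
  exact hchar.symm

/-- `dim ((V^{⊗n})^K) = (1/|K|) Σ_{τ ∈ K} (dim V)^{c(τ)}`, i.e. the dimension of the space
of `K`-invariants of the `n`-th tensor power equals the cycle index polynomial of `K`
evaluated at `(dim V, …, dim V)`. -/
theorem statement6 (k V : Type*) [Field k] [CharZero k] [AddCommGroup V] [Module k V]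
    [FiniteDimensional k V] (n : ℕ) (hn : 1 ≤ n)
    (K : Subgroup (Equiv.Perm (Fin n))) [Fintype K] :
    (Module.finrank k (permInvariants k V n K) : ℚ) =
      (Fintype.card K : ℚ)⁻¹ *
        ∑ τ : K, (Module.finrank k V : ℚ) ^ cyclesCount (τ : Equiv.Perm (Fin n)) :=
  statement6_general k V n K
end

section
/- Let n ≥ 1 and a, b : {1,…,n} → ℕ. For a vector v and 1 ≤ i ≤ n write |v_{>i}| = Σ_{j>i} v_j and |v| = Σ_j v_j. Then for every integer t: ∏_{i=1}^{n} ( t + |a_{>i}| − |b_{>i}| )_{b_i} = Σ_{p} ( ∏_{i=1}^{n−1} C(b_i, p_i) · ( |a_{>i}| − |p_{>i}| )_{p_i} ) · (t)_{|b| − |p|}, where the sum runs over all p : {1,…,n−1} → ℕ with p_i ≤ b_i for each i, (x)_r = x(x−1)⋯(x−r+1) denotes the falling factorial of an integer x (with (x)_0 = 1), and C denotes the binomial coefficient. (All terms in which |p_{>i}| > |a_{>i}| for some i vanish.) -/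
/-!
Induction on `n`, splitting off the first factor. By induction the remaining product is
`Σ_{p'} W(p') (t)_m` with `m = |b_{>0}| - |p'|`, and the first factor then reads
`(t - m + A)_{b_0}` with `A = |a_{>0}| - |p'|`. Chu–Vandermonde for falling factorials together
with `(t)_m (t - m)_r = (t)_{m+r}` expands `(t - m + A)_{b_0} (t)_m` as
`Σ_k C(b_0,k) (A)_k (t)_{m + b_0 - k}`, and `k` becomes the new coordinate `p_0`.
-/

open Finset

/-- The falling factorial `(x)_r = x(x-1)⋯(x-r+1)` of an integer `x`, with `(x)_0 = 1`. -/
noncomputable def fallInt (x : ℤ) (r : ℕ) : ℤ := (descPochhammer ℤ r).eval x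

/-- `|v_{>i}| = Σ_{j > i} v_j`. -/
def gtSum {N : ℕ} (v : Fin N → ℕ) (i : Fin N) : ℕ :=
  ∑ j ∈ Finset.univ.filter (fun j : Fin N => i < j), v j

lemma fallInt_add (x : ℤ) (m k : ℕ) :
    fallInt x (m + k) = fallInt x m * fallInt (x - m) k := by
  simpa [fallInt, Polynomial.eval_comp] using
    (congrArg (Polynomial.eval x) (descPochhammer_mul (R := ℤ) m k)).symm

lemma fallInt_vandermonde (x y : ℤ) (c : ℕ) :
    fallInt (x + y) c =
      ∑ k : Fin (c + 1), (c.choose k : ℤ) * fallInt x k * fallInt y (c - k) := by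
  have h := Ring.descPochhammer_smeval_add (R := ℤ) c (Commute.all x y)
  rw [Nat.sum_antidiagonal_eq_sum_range_succ_mk, ← Fin.sum_univ_eq_sum_range] at h
  simpa [fallInt, Polynomial.eval_eq_smeval, mul_assoc] using h

/-- The normal ordering `y^c x^A = Σ_k C(c,k) (A)_k x^{A-k} y^{c-k}` (with `y = d/dx`) applied to
`y^m x^t = (t)_m x^{t-m}`. -/
lemma fallInt_sub_add_mul_fallInt (t A : ℤ) (m c : ℕ) :
    fallInt (t - m + A) c * fallInt t m =
      ∑ k : Fin (c + 1), (c.choose k : ℤ) * fallInt A k * fallInt t (m + (c - k)) := by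
  rw [add_comm, fallInt_vandermonde, Finset.sum_mul]
  refine Finset.sum_congr rfl fun k _ => ?_
  rw [fallInt_add]
  ring

lemma Fin.sum_pi_eq_sum_sum_cons {M : Type*} [AddCommMonoid M] {n : ℕ}
    {α : Fin (n + 1) → Type*} [∀ i, Fintype (α i)] (f : ((i : Fin (n + 1)) → α i) → M) :
    ∑ p, f p = ∑ k : α 0, ∑ p : (i : Fin n) → α i.succ, f (Fin.cons k p) := by
  rw [← Fintype.sum_equiv (Fin.consEquiv α) _ _ (fun _ => rfl), Fintype.sum_prod_type]
  rfl

lemma gtSum_zero {n : ℕ} (v : Fin (n + 1) → ℕ) : gtSum v 0 = ∑ j : Fin n, v j.succ := by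
  simp [gtSum, Finset.sum_filter, Fin.sum_univ_succ, Fin.succ_pos]

lemma gtSum_succ {n : ℕ} (v : Fin (n + 1) → ℕ) (i : Fin n) :
    gtSum v i.succ = gtSum (fun j => v j.succ) i := by
  simp [gtSum, Finset.sum_filter, Fin.sum_univ_succ]

/-- The summand indexed by `p` of the normal coordinate `N(A, |p|)`. -/
noncomputable def normalWeight {n : ℕ} (a b : Fin (n + 1) → ℕ)
    (p : (i : Fin n) → Fin (b i.castSucc + 1)) : ℤ :=
  ∏ i : Fin n, ((b i.castSucc).choose (p i) : ℤ) *
    fallInt ((gtSum a i.castSucc : ℤ) - (gtSum (fun j => (p j : ℕ)) i : ℤ)) (p i)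

lemma normalWeight_cons {n : ℕ} (a b : Fin (n + 2) → ℕ) (k : Fin (b 0 + 1))
    (p : (i : Fin n) → Fin (b i.castSucc.succ + 1)) :
    normalWeight a b (Fin.cons k p : (i : Fin (n + 1)) → Fin (b i.castSucc + 1)) =
      ((b 0).choose k : ℤ) * fallInt ((gtSum a 0 : ℤ) - (∑ i, (p i : ℕ) : ℕ)) k *
        normalWeight (fun j => a j.succ) (fun j => b j.succ) p := by
  simp only [normalWeight, Fin.prod_univ_succ, gtSum_zero, gtSum_succ, ← Fin.succ_castSucc,
    Fin.castSucc_zero]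
  rfl

lemma sum_val_le_sum {n : ℕ} (b : Fin (n + 1) → ℕ)
    (p : (i : Fin n) → Fin (b i.castSucc + 1)) :
    ∑ i, (p i : ℕ) ≤ ∑ i, b i := by
  rw [Fin.sum_univ_castSucc]
  exact le_add_right (Finset.sum_le_sum fun i _ => Nat.lt_succ_iff.mp (p i).isLt)

lemma sum_sub_sum_cons {n : ℕ} (b : Fin (n + 2) → ℕ) (k : Fin (b 0 + 1))
    (p : (i : Fin n) → Fin (b i.castSucc.succ + 1)) :
    ∑ i, b i - ∑ i, ((Fin.cons k p : (i : Fin (n + 1)) → Fin (b i.castSucc + 1)) i : ℕ) =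
      ∑ i : Fin (n + 1), b i.succ - ∑ i, (p i : ℕ) + (b 0 - k) := by
  have hp := sum_val_le_sum (fun j => b j.succ) p
  have hk : (k : ℕ) ≤ b 0 := Nat.lt_succ_iff.mp k.isLt
  have hcons : ∑ i, ((Fin.cons k p : (i : Fin (n + 1)) → Fin (b i.castSucc + 1)) i : ℕ) =
      k + ∑ i, (p i : ℕ) := Fin.sum_univ_succ _
  rw [hcons, Fin.sum_univ_succ b]
  omega

/-- The identity obtained by evaluating the normal-form expansion
`∏_{i=1}^n x^{a_i} y^{b_i} = Σ_k N(A,k) x^{|a|-k} y^{|b|-k} ℏ^k` in the Weyl algebra on the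
monomial `x^t`:  for all `a, b : Fin (n+1) → ℕ` (so `n+1 ≥ 1` indices) and every `t : ℤ`,
`∏_i (t + |a_{>i}| - |b_{>i}|)_{b_i}` equals
`Σ_p (∏_i C(b_i,p_i) (|a_{>i}| - |p_{>i}|)_{p_i}) (t)_{|b|-|p|}`,
summed over `p` on the first `n` indices with `p_i ≤ b_i`. -/
theorem statement9 (n : ℕ) (a b : Fin (n + 1) → ℕ) (t : ℤ) :
    ∏ i : Fin (n + 1), fallInt (t + (gtSum a i : ℤ) - (gtSum b i : ℤ)) (b i) =
      ∑ p : (i : Fin n) → Fin (b i.castSucc + 1),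
        (∏ i : Fin n,
            ((b i.castSucc).choose (p i) : ℤ) *
              fallInt ((gtSum a i.castSucc : ℤ) -
                  ((∑ j ∈ Finset.univ.filter (fun j : Fin n => i < j), ((p j : ℕ))) : ℤ))
                (p i)) *
          fallInt t ((∑ i : Fin (n + 1), b i) - ∑ i : Fin n, (p i : ℕ)) := by
  suffices ∏ i : Fin (n + 1), fallInt (t + (gtSum a i : ℤ) - (gtSum b i : ℤ)) (b i) =
      ∑ p, normalWeight a b p * fallInt t (∑ i, b i - ∑ i, (p i : ℕ)) by
    simpa only [normalWeight, gtSum, Nat.cast_sum] using this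
  induction n with
  | zero => simp [normalWeight, gtSum_zero]
  | succ n ih =>
    rw [Fin.prod_univ_succ, Fin.sum_pi_eq_sum_sum_cons, Finset.sum_comm]
    simp only [gtSum_succ, ih, Finset.mul_sum]
    refine Finset.sum_congr rfl fun p _ => ?_
    have hQ := sum_val_le_sum (fun j => b j.succ) p
    have harg : t + (gtSum a 0 : ℤ) - (gtSum b 0 : ℤ) =
        t - (∑ i : Fin (n + 1), b i.succ - ∑ i, (p i : ℕ) : ℕ) +
          ((gtSum a 0 : ℤ) - (∑ i, (p i : ℕ) : ℕ)) := by
      rw [gtSum_zero b]; push_cast [hQ]; ring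
    rw [harg, mul_left_comm, fallInt_sub_add_mul_fallInt, Finset.mul_sum]
    refine Finset.sum_congr rfl fun k _ => ?_
    rw [normalWeight_cons, sum_sub_sum_cons]
    ring
end

section
/- Let R be a commutative ring and let M, E : R[t] → R[t] be the R-linear endomorphisms of the polynomial ring given by M(f) = t·f and E(f) = t²·f′ (multiplication by t² composed with the formal derivative). Then for all a, b ∈ ℕ, E^b ∘ M^a = Σ_{k=0}^{b} C(b,k) · a^{(k)} · M^{a+k} ∘ E^{b−k} as R-linear endomorphisms of R[t], where C(b,k) is the binomial coefficient and a^{(k)} = a(a+1)⋯(a+k−1) is the rising factorial (so the k-th term vanishes whenever a = 0 and k ≥ 1). -/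
open Polynomial

private lemma EM_comm_aux {R : Type*} [CommRing R]
    (M E : Module.End R (Polynomial R))
    (hM : ∀ f : Polynomial R, M f = Polynomial.X * f)
    (hE : ∀ f : Polynomial R, E f = Polynomial.X ^ 2 * Polynomial.derivative f) :
    E * M = M * E + M * M := by
  refine LinearMap.ext fun f => ?_
  simp only [Module.End.mul_apply, LinearMap.add_apply, hM, hE, derivative_mul, derivative_X,
    one_mul]
  ring

private lemma E_mul_M_pow {R : Type*} [CommRing R]
    (M E : Module.End R (Polynomial R))
    (hM : ∀ f : Polynomial R, M f = Polynomial.X * f)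
    (hE : ∀ f : Polynomial R, E f = Polynomial.X ^ 2 * Polynomial.derivative f) :
    ∀ a : ℕ, E * M ^ a = M ^ a * E + a • M ^ (a + 1)
  | 0 => by simp
  | a + 1 => by
    have h := EM_comm_aux M E hM hE
    rw [pow_succ, ← mul_assoc, E_mul_M_pow M E hM hE a, add_mul, mul_assoc, h, mul_add,
      ← mul_assoc, ← pow_succ, smul_mul_assoc, ← pow_succ, ← mul_assoc, ← pow_succ,
      succ_nsmul, add_assoc, add_comm (a • M ^ (a + 1 + 1))]
    rw [← pow_succ]

/-- The operator form of the basic `M`-Weyl normal-ordering identity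
`y^b x^a = Σ_k C(b,k) a^{(k)} x^{a+k} y^{b-k} ℏ^k`: if `M` is multiplication by `t` and
`E(f) = t² f'` on `R[t]`, then `E^b ∘ M^a = Σ_{k=0}^b C(b,k) a^{(k)} M^{a+k} ∘ E^{b-k}`,
where `a^{(k)} = a(a+1)⋯(a+k-1)` is the rising factorial. -/
theorem statement12 (R : Type*) [CommRing R]
    (M E : Module.End R (Polynomial R))
    (hM : ∀ f : Polynomial R, M f = Polynomial.X * f)
    (hE : ∀ f : Polynomial R, E f = Polynomial.X ^ 2 * Polynomial.derivative f)
    (a b : ℕ) :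
    E ^ b * M ^ a =
      ∑ k ∈ Finset.range (b + 1),
        (Nat.choose b k * Nat.ascFactorial a k) • (M ^ (a + k) * E ^ (b - k)) := by
  induction b with
  | zero => simp
  | succ b ih =>
    set A : ℕ → Module.End R (Polynomial R) :=
      fun k => (Nat.choose b k * Nat.ascFactorial a k) • (M ^ (a + k) * E ^ (b + 1 - k)) with hA
    set B : ℕ → Module.End R (Polynomial R) :=
      fun k => (Nat.choose b k * Nat.ascFactorial a (k + 1)) •
        (M ^ (a + (k + 1)) * E ^ (b + 1 - (k + 1))) with hB
    have key : ∀ k ∈ Finset.range (b + 1),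
        E * ((Nat.choose b k * Nat.ascFactorial a k) • (M ^ (a + k) * E ^ (b - k)))
          = A k + B k := by
      intro k hk
      have hk' : k ≤ b := Nat.lt_succ_iff.mp (Finset.mem_range.mp hk)
      have h1 : b + 1 - k = (b - k) + 1 := by omega
      have h2 : b + 1 - (k + 1) = b - k := by omega
      rw [hA, hB]
      simp only [h1, h2]
      rw [mul_smul_comm, ← mul_assoc, E_mul_M_pow M E hM hE (a + k), add_mul, mul_assoc,
        ← pow_succ', smul_mul_assoc, smul_add, smul_smul]
      congr 2
      rw [Nat.ascFactorial_succ]; ring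
    have lhs_eq : E ^ (b + 1) * M ^ a
        = (∑ k ∈ Finset.range (b + 1), A k) + ∑ k ∈ Finset.range (b + 1), B k := by
      rw [pow_succ', mul_assoc, ih, Finset.mul_sum, Finset.sum_congr rfl key,
        Finset.sum_add_distrib]
    rw [lhs_eq]
    -- now work on the RHS
    set f : ℕ → Module.End R (Polynomial R) :=
      fun k => (Nat.choose (b + 1) k * Nat.ascFactorial a k) • (M ^ (a + k) * E ^ (b + 1 - k))
      with hf
    show _ = ∑ k ∈ Finset.range (b + 1 + 1), f k
    rw [Finset.sum_range_succ' f (b + 1)]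
    have hsplit : ∀ k, f (k + 1) = B k + A (k + 1) := by
      intro k
      rw [hf, hA, hB]
      simp only
      rw [Nat.choose_succ_succ, add_mul, add_smul]
    have htop : A (b + 1) = 0 := by
      rw [hA]; simp [Nat.choose_succ_self]
    have hshift : (∑ k ∈ Finset.range (b + 1), A (k + 1)) + f 0
        = ∑ k ∈ Finset.range (b + 1), A k := by
      have h0 : f 0 = A 0 := by rw [hf, hA]; simp
      rw [h0, ← Finset.sum_range_succ' A (b + 1), Finset.sum_range_succ A (b + 1), htop, add_zero]
    calc (∑ k ∈ Finset.range (b + 1), A k) + ∑ k ∈ Finset.range (b + 1), B k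
        = (∑ k ∈ Finset.range (b + 1), B k + ∑ k ∈ Finset.range (b + 1), A (k + 1)) + f 0 := by
          rw [add_assoc, hshift, add_comm]
      _ = (∑ k ∈ Finset.range (b + 1), f (k + 1)) + f 0 := by
          rw [← Finset.sum_add_distrib]
          congr 1
          exact Finset.sum_congr rfl fun k _ => (hsplit k).symm
end

section
/- Fix n, m ≥ 1 and let A = ℚ[ℏ][x_{i,j}, y_{i,j} : 1 ≤ i ≤ n, 1 ≤ j ≤ m] be the polynomial ring over ℚ[ℏ]. For a multi-index I : Fin n × Fin m → ℕ write ∂_x^I = ∏_{i,j} (∂/∂x_{i,j})^{I(i,j)}, similarly ∂_y^I, I! = ∏_{i,j} I(i,j)!, and |I| = Σ_{i,j} I(i,j); define the star product f ⋆ g = Σ_I (ℏ^{|I|}/I!) (∂_y^I f)(∂_x^I g) (a finite sum). Let S_n act on A by σ•x_{i,j} = x_{σ(i),j}, σ•y_{i,j} = y_{σ(i),j}, and let s(f) = (1/n!) Σ_{σ∈S_n} σ•f. For exponent matrices a, b, c, d : Fin n × Fin m → ℕ write x^a y^b = ∏_{i,j} x_{i,j}^{a(i,j)} y_{i,j}^{b(i,j)}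 and σ(c)(i,j) = c(σ⁻¹(i),j). Then s(x^a y^b) ⋆ s(x^c y^d) = (1/n!) Σ_{σ∈S_n} Σ_{I} ( ∏_{i,j} C(b(i,j), I(i,j)) · (σ(c)(i,j))_{I(i,j)} ) · ℏ^{|I|} · s( x^{a+σ(c)−I} y^{b+σ(d)−I} ), where the inner sum runs over all multi-indices I with I ≤ b and I ≤ σ(c) componentwise, C is the binomial coefficient, and (x)_r is the falling factorial. -/
/-!
Since `s(x^a y^b) = (1/n!) Σ_σ x^{σ(a)} y^{σ(b)}` and `⋆` becomes bilinear once the sum over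
multi-indices is cut off at a bound common to all terms, the left side is
`(1/n!)² Σ_{σ,τ} x^{σ(a)} y^{σ(b)} ⋆ x^{τ(c)} y^{τ(d)}`. On monomials
`∂_y^I (x^a y^b) = (b)_I x^a y^{b-I}` and `∂_x^I (x^c y^d) = (c)_I x^{c-I} y^d`, and
`(b)_I / I! = C(b, I)`, which gives the normal-ordering formula for `x^a y^b ⋆ x^c y^d`.
That formula is `S_n`-equivariant, so substituting `τ = σρ` collapses the double sum to
`(1/n!) Σ_ρ s(x^a y^b ⋆ x^{ρ(c)} y^{ρ(d)})`.
-/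

open Finset MvPolynomial

/-- Variable index set: `((i,j), false)` is `x_{i,j}` and `((i,j), true)` is `y_{i,j}`. -/
abbrev Var13 (n m : ℕ) := (Fin n × Fin m) × Bool

/-- The algebra `A = ℚ[ℏ][x_{i,j}, y_{i,j}]`, with `ℏ = Polynomial.X` in the base ring. -/
abbrev Alg13 (n m : ℕ) := MvPolynomial (Var13 n m) (Polynomial ℚ)

/-- The iterated partial derivative `∂^I` with respect to the `x`-variables
(if `isY = false`) or the `y`-variables (if `isY = true`):
`∂^I = ∏_{i,j} (∂/∂x_{i,j})^{I(i,j)}` (the factors commute, taken in a fixed order). -/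
noncomputable def derMulti (n m : ℕ) (isY : Bool) (I : Fin n × Fin m → ℕ) :
    Module.End (Polynomial ℚ) (Alg13 n m) :=
  ((Finset.univ : Finset (Fin n × Fin m)).toList).foldr
    (fun p F => ((pderiv ((p, isY) : Var13 n m)).toLinearMap ^ I p) * F) 1

/-- The star product `f ⋆ g = Σ_I (ℏ^{|I|}/I!) (∂_y^I f)(∂_x^I g)`.  The sum over all
multi-indices `I` is finite: all terms with some `I(i,j) > totalDegree f` vanish, so it is
realized as a sum over `I : Fin n × Fin m → Fin (totalDegree f + 1)`. -/
noncomputable def star13 (n m : ℕ) (f g : Alg13 n m) : Alg13 n m :=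
  ∑ I : Fin n × Fin m → Fin (f.totalDegree + 1),
    (Polynomial.C (((∏ p : Fin n × Fin m, Nat.factorial (I p) : ℕ) : ℚ))⁻¹ *
        Polynomial.X ^ (∑ p : Fin n × Fin m, (I p : ℕ))) •
      (derMulti n m true (fun p => I p) f * derMulti n m false (fun p => I p) g)

/-- The symmetrization `s(f) = (1/n!) Σ_{σ ∈ S_n} σ • f`, where `S_n` acts by
`σ • x_{i,j} = x_{σ(i),j}` and `σ • y_{i,j} = y_{σ(i),j}`. -/
noncomputable def sym13 (n m : ℕ) (f : Alg13 n m) : Alg13 n m :=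
  Polynomial.C ((n.factorial : ℚ))⁻¹ •
    ∑ σ : Equiv.Perm (Fin n),
      rename (fun v : Var13 n m => ((σ v.1.1, v.1.2), v.2)) f

/-- The monomial `x^a y^b = ∏_{i,j} x_{i,j}^{a(i,j)} y_{i,j}^{b(i,j)}`. -/
noncomputable def xy13 (n m : ℕ) (a b : Fin n × Fin m → ℕ) : Alg13 n m :=
  ∏ p : Fin n × Fin m, (X ((p, false) : Var13 n m) ^ a p * X ((p, true) : Var13 n m) ^ b p)

section IteratedPDeriv

variable {σ R : Type*} [CommSemiring R]

lemma pderiv_pow_monomial (i : σ) (k : ℕ) (e : σ →₀ ℕ) (r : R) :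
    ((pderiv i).toLinearMap ^ k) (monomial e r)
      = monomial (e - Finsupp.single i k) ((e i).descFactorial k * r) := by
  induction k with
  | zero => simp
  | succ k ih =>
    rw [pow_succ', Module.End.mul_apply, ih, Derivation.coeFn_coe, pderiv_monomial, tsub_tsub,
      ← Finsupp.single_add, Finsupp.tsub_apply, Finsupp.single_eq_same, Nat.descFactorial_succ]
    push_cast
    ring_nf

lemma foldr_pderiv_pow_monomial (k : σ → ℕ) (l : List σ) (hl : l.Nodup) (e : σ →₀ ℕ)
    (r : R) :
    (l.foldr (fun i F => (pderiv i).toLinearMap ^ k i * F)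
        (1 : Module.End R (MvPolynomial σ R))) (monomial e r)
      = monomial (e - (l.map fun i => Finsupp.single i (k i)).sum)
          ((l.map fun i => (e i).descFactorial (k i)).prod * r) := by
  induction l with
  | nil => simp
  | cons i l ih =>
    obtain ⟨hi, hl⟩ := List.nodup_cons.1 hl
    have untouched : (l.map fun j => Finsupp.single j (k j)).sum i = 0 := by
      rw [← Finsupp.applyAddHom_apply, map_list_sum, List.map_map]
      exact List.sum_eq_zero fun x hx => by
        obtain ⟨j, hj, rfl⟩ := List.mem_map.1 hx
        simp [ne_of_mem_of_not_mem hj hi]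
    rw [List.foldr_cons, Module.End.mul_apply, ih hl, pderiv_pow_monomial, Finsupp.tsub_apply,
      untouched, Nat.sub_zero, tsub_tsub, List.map_cons, List.map_cons, List.sum_cons,
      List.prod_cons, add_comm]
    push_cast
    ring_nf

end IteratedPDeriv

section FinPi

variable {ι M : Type*} [Fintype ι] [DecidableEq ι] [AddCommMonoid M]

lemma sum_fin_pi_eq_sum_Iic (b : ι → ℕ) (F : (ι → ℕ) → M) :
    ∑ I : (i : ι) → Fin (b i + 1), F (fun i => I i) = ∑ I ∈ Iic b, F I :=
  Finset.sum_bij' (fun I _ i => I i) (fun J hJ i => ⟨J i, Nat.lt_succ_of_le (mem_Iic.1 hJ i)⟩)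
    (fun I _ => mem_Iic.2 fun i => Nat.lt_succ_iff.1 (I i).isLt) (fun _ _ => mem_univ _)
    (fun _ _ => rfl) (fun _ _ => rfl) (fun _ _ => rfl)

lemma sum_filter_fin_pi_eq_sum_Iic (b c : ι → ℕ) (F : (ι → ℕ) → M) :
    ∑ I ∈ univ.filter (fun I : (i : ι) → Fin (b i + 1) => ∀ i, (I i : ℕ) ≤ c i),
        F (fun i => I i)
      = ∑ I ∈ Iic (b ⊓ c), F I := by
  rw [sum_filter, sum_fin_pi_eq_sum_Iic b fun I => if ∀ i, I i ≤ c i then F I else 0,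
    ← sum_filter]
  congr 1
  ext I
  simp [Pi.le_def]

end FinPi

namespace QSym13

variable {n m : ℕ}

def permBlocks (σ : Equiv.Perm (Fin n)) (u : Fin n × Fin m → ℕ) : Fin n × Fin m → ℕ :=
  fun p => u (σ⁻¹ p.1, p.2)

@[to_additive]
lemma prod_comp_permBlocks {M : Type*} [CommMonoid M] (σ : Equiv.Perm (Fin n))
    (F : Fin n × Fin m → M) : ∏ p : Fin n × Fin m, F (σ⁻¹ p.1, p.2) = ∏ p, F p :=
  Fintype.prod_equiv (Equiv.prodCongr σ⁻¹ (Equiv.refl (Fin m))) _ _ fun _ => rfl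

@[simp] lemma permBlocks_one (u : Fin n × Fin m → ℕ) : permBlocks 1 u = u := rfl

lemma permBlocks_mul (σ τ : Equiv.Perm (Fin n)) (u : Fin n × Fin m → ℕ) :
    permBlocks (σ * τ) u = permBlocks σ (permBlocks τ u) := by
  funext p; simp [permBlocks, mul_inv_rev]

lemma permBlocks_inv_permBlocks (σ : Equiv.Perm (Fin n)) (u : Fin n × Fin m → ℕ) :
    permBlocks σ⁻¹ (permBlocks σ u) = u := by
  rw [← permBlocks_mul, inv_mul_cancel, permBlocks_one]

lemma permBlocks_permBlocks_inv (σ : Equiv.Perm (Fin n)) (u : Fin n × Fin m → ℕ) :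
    permBlocks σ (permBlocks σ⁻¹ u) = u := by
  simpa using permBlocks_inv_permBlocks σ⁻¹ u

lemma permBlocks_le_permBlocks_iff (σ : Equiv.Perm (Fin n)) {u v : Fin n × Fin m → ℕ} :
    permBlocks σ u ≤ permBlocks σ v ↔ u ≤ v :=
  ⟨fun h p => by simpa [permBlocks] using h (σ p.1, p.2), fun h _ => h _⟩

lemma sum_Iic_permBlocks {M : Type*} [AddCommMonoid M] (σ : Equiv.Perm (Fin n))
    (u : Fin n × Fin m → ℕ) (F : (Fin n × Fin m → ℕ) → M) :
    ∑ I ∈ Iic (permBlocks σ u), F I = ∑ J ∈ Iic u, F (permBlocks σ J) :=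
  Finset.sum_nbij' (permBlocks σ⁻¹) (permBlocks σ)
    (fun I hI => mem_Iic.2 <| (permBlocks_le_permBlocks_iff σ).1 <| by
      rw [permBlocks_permBlocks_inv]; exact mem_Iic.1 hI)
    (fun J hJ => mem_Iic.2 <| (permBlocks_le_permBlocks_iff σ).2 (mem_Iic.1 hJ))
    (fun I _ => permBlocks_permBlocks_inv σ I) (fun J _ => permBlocks_inv_permBlocks σ J)
    (fun I _ => by rw [permBlocks_permBlocks_inv])

lemma permBlocks_le_sum (σ : Equiv.Perm (Fin n)) (a b : Fin n × Fin m → ℕ)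
    (p : Fin n × Fin m) :
    permBlocks σ b p ≤ ∑ q, (a q + b q) :=
  (Nat.le_add_left _ _).trans
    (Finset.single_le_sum (f := fun q => a q + b q) (fun _ _ => Nat.zero_le _) (mem_univ _))

lemma rename_xy13 (σ : Equiv.Perm (Fin n)) (a b : Fin n × Fin m → ℕ) :
    rename (fun v : Var13 n m => ((σ v.1.1, v.1.2), v.2)) (xy13 n m a b)
      = xy13 n m (permBlocks σ a) (permBlocks σ b) := by
  simp only [xy13, map_prod, map_mul, map_pow, rename_X]
  exact (prod_comp_permBlocks σ _).symm.trans (by simp [permBlocks])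

lemma sym13_xy13 (a b : Fin n × Fin m → ℕ) :
    sym13 n m (xy13 n m a b)
      = Polynomial.C ((n.factorial : ℚ))⁻¹ •
          ∑ σ : Equiv.Perm (Fin n), xy13 n m (permBlocks σ a) (permBlocks σ b) := by
  simp only [sym13, rename_xy13]

lemma sym13_sum_smul {ι : Type*} (s : Finset ι) (r : ι → Polynomial ℚ)
    (f : ι → Alg13 n m) :
    sym13 n m (∑ i ∈ s, r i • f i) = ∑ i ∈ s, r i • sym13 n m (f i) := by
  simp only [sym13, map_sum, map_smul, Finset.smul_sum]
  rw [Finset.sum_comm]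
  simp only [smul_comm (r _)]

noncomputable def xyExp (a b : Fin n × Fin m → ℕ) : Var13 n m →₀ ℕ :=
  Finsupp.equivFunOnFinite.symm fun v => if v.2 then b v.1 else a v.1

lemma xy13_eq_monomial (a b : Fin n × Fin m → ℕ) :
    xy13 n m a b = monomial (xyExp a b) 1 := by
  rw [monomial_eq, C_1, one_mul, Finsupp.prod_fintype _ _ (by simp), Fintype.prod_prod_type]
  simp [xy13, xyExp, mul_comm]

lemma derMulti_monomial (isY : Bool) (I : Fin n × Fin m → ℕ) (e : Var13 n m →₀ ℕ)
    (r : Polynomial ℚ) :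
    derMulti n m isY I (monomial e r)
      = monomial (e - ∑ p, Finsupp.single (p, isY) (I p))
          ((∏ p, (e (p, isY)).descFactorial (I p) : ℕ) * r) := by
  have := foldr_pderiv_pow_monomial (fun v : Var13 n m => I v.1)
    ((Finset.univ.toList).map fun p => (p, isY))
    ((Finset.nodup_toList _).map fun _ _ h => (Prod.mk.inj h).1) e r
  rw [List.foldr_map, List.map_map, List.map_map] at this
  rw [derMulti, this, Finset.sum_map_toList, Finset.prod_map_toList]
  rfl

lemma derMulti_true_xy13 (I a b : Fin n × Fin m → ℕ) :
    derMulti n m true I (xy13 n m a b)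
      = ((∏ p, (b p).descFactorial (I p) : ℕ) : Polynomial ℚ) • xy13 n m a (b - I) := by
  rw [xy13_eq_monomial, xy13_eq_monomial, derMulti_monomial, smul_monomial, smul_eq_mul]
  congr 2
  ext ⟨p, _ | _⟩ <;> simp [xyExp, Finsupp.single_apply]

lemma derMulti_false_xy13 (I a b : Fin n × Fin m → ℕ) :
    derMulti n m false I (xy13 n m a b)
      = ((∏ p, (a p).descFactorial (I p) : ℕ) : Polynomial ℚ) • xy13 n m (a - I) b := by
  rw [xy13_eq_monomial, xy13_eq_monomial, derMulti_monomial, smul_monomial, smul_eq_mul]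
  congr 2
  ext ⟨p, _ | _⟩ <;> simp [xyExp, Finsupp.single_apply]

lemma xy13_mul_xy13 (a b c d : Fin n × Fin m → ℕ) :
    xy13 n m a b * xy13 n m c d = xy13 n m (a + c) (b + d) := by
  simp only [xy13, ← Finset.prod_mul_distrib, Pi.add_apply, pow_add]
  exact Finset.prod_congr rfl fun _ _ => by ring

lemma isHomogeneous_xy13 (a b : Fin n × Fin m → ℕ) :
    (xy13 n m a b).IsHomogeneous (∑ p, (a p + b p)) :=
  IsHomogeneous.prod _ _ _ fun _ _ =>
    (isHomogeneous_X_pow _ _).mul (isHomogeneous_X_pow _ _)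

lemma eval_one_xy13 (a b : Fin n × Fin m → ℕ) : eval 1 (xy13 n m a b) = 1 := by
  simp [xy13]

lemma totalDegree_sym13_xy13 (a b : Fin n × Fin m → ℕ) :
    (sym13 n m (xy13 n m a b)).totalDegree = ∑ p, (a p + b p) := by
  have hom : (sym13 n m (xy13 n m a b)).IsHomogeneous (∑ p, (a p + b p)) := by
    rw [sym13_xy13, smul_eq_C_mul]
    refine (IsHomogeneous.sum _ _ _ fun σ _ => ?_).C_mul _
    simpa only [permBlocks, sum_comp_permBlocks σ fun p => a p + b p]
      using isHomogeneous_xy13 (permBlocks σ a) (permBlocks σ b)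
  have eval_one : eval 1 (sym13 n m (xy13 n m a b)) = 1 := by
    simp only [sym13_xy13, smul_eval, map_sum, eval_one_xy13, sum_const, card_univ,
      Fintype.card_perm, Fintype.card_fin, nsmul_one]
    rw [← Polynomial.C_eq_natCast, ← Polynomial.C_mul, inv_mul_cancel₀ (by positivity),
      Polynomial.C_1]
  exact hom.totalDegree fun h => by simp [h] at eval_one

noncomputable def starWeight (I : Fin n × Fin m → ℕ) : Polynomial ℚ :=
  Polynomial.C ((∏ p, (I p).factorial : ℕ) : ℚ)⁻¹ * Polynomial.X ^ ∑ p, I p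

/-- Unlike `star13`, whose cutoff depends on its first argument, this is bilinear. -/
noncomputable def starTrunc (D : ℕ) :
    Alg13 n m →ₗ[Polynomial ℚ] Alg13 n m →ₗ[Polynomial ℚ] Alg13 n m :=
  ∑ I ∈ Iic (fun _ => D : Fin n × Fin m → ℕ), starWeight I •
    (LinearMap.mul (Polynomial ℚ) (Alg13 n m)).compl₁₂ (derMulti n m true I)
      (derMulti n m false I)

lemma starTrunc_apply (D : ℕ) (f g : Alg13 n m) :
    starTrunc D f g = ∑ I ∈ Iic (fun _ => D : Fin n × Fin m → ℕ),
      starWeight I • (derMulti n m true I f * derMulti n m false I g) := by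
  simp [starTrunc, LinearMap.sum_apply]

lemma star13_eq_starTrunc (f g : Alg13 n m) : star13 n m f g = starTrunc f.totalDegree f g := by
  rw [starTrunc_apply, ← sum_fin_pi_eq_sum_Iic]
  rfl

noncomputable def starCoeff (b c I : Fin n × Fin m → ℕ) : Polynomial ℚ :=
  ((∏ p, (b p).choose (I p) * (c p).descFactorial (I p) : ℕ) : Polynomial ℚ) *
    Polynomial.X ^ ∑ p, I p

noncomputable def starXY (a b c d : Fin n × Fin m → ℕ) : Alg13 n m :=
  ∑ I ∈ Iic (b ⊓ c), starCoeff b c I • xy13 n m (a + c - I) (b + d - I)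

lemma derMulti_mul_derMulti_xy13_eq_zero {I b c : Fin n × Fin m → ℕ} (h : ¬ I ≤ b ⊓ c)
    (a d : Fin n × Fin m → ℕ) :
    derMulti n m true I (xy13 n m a b) * derMulti n m false I (xy13 n m c d) = 0 := by
  simp only [Pi.le_def, not_forall] at h
  obtain ⟨p, hp⟩ := h
  rw [derMulti_true_xy13, derMulti_false_xy13, smul_mul_smul_comm, ← Nat.cast_mul,
    ← Finset.prod_mul_distrib, Finset.prod_eq_zero (mem_univ p), Nat.cast_zero, zero_smul]
  rcases le_or_gt (I p) (b p) with hb | hb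
  · have hc : c p < I p := by simp only [Pi.inf_apply, le_inf_iff, not_and] at hp; omega
    simp [Nat.descFactorial_eq_zero_iff_lt.2 hc]
  · simp [Nat.descFactorial_eq_zero_iff_lt.2 hb]

lemma starWeight_smul_derMulti_mul_derMulti_xy13 {I b c : Fin n × Fin m → ℕ}
    (h : I ≤ b ⊓ c) (a d : Fin n × Fin m → ℕ) :
    starWeight I • (derMulti n m true I (xy13 n m a b) * derMulti n m false I (xy13 n m c d))
      = starCoeff b c I • xy13 n m (a + c - I) (b + d - I) := by
  have hb : I ≤ b := h.trans inf_le_left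
  have hc : I ≤ c := h.trans inf_le_right
  have exps : xy13 n m a (b - I) * xy13 n m (c - I) d = xy13 n m (a + c - I) (b + d - I) := by
    rw [xy13_mul_xy13]
    congr 1 <;> funext p <;> simp only [Pi.add_apply, Pi.sub_apply] <;> grind [hb p, hc p]
  have coeff : starWeight I * ((∏ p, (b p).descFactorial (I p) : ℕ) : Polynomial ℚ)
      = ((∏ p, (b p).choose (I p) : ℕ) : Polynomial ℚ) * Polynomial.X ^ ∑ p, I p := by
    have cancel : Polynomial.C ((∏ p, (I p).factorial : ℕ) : ℚ)⁻¹
        * Polynomial.C ((∏ p, (I p).factorial : ℕ) : ℚ) = 1 := by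
      rw [← Polynomial.C_mul, inv_mul_cancel₀ (by positivity), Polynomial.C_1]
    simp only [starWeight, Nat.descFactorial_eq_factorial_mul_choose, Finset.prod_mul_distrib,
      Nat.cast_mul, ← Polynomial.C_eq_natCast] at cancel ⊢
    linear_combination (Polynomial.X ^ (∑ p, I p)
      * Polynomial.C ((∏ p, (b p).choose (I p) : ℕ) : ℚ)) * cancel
  rw [derMulti_true_xy13, derMulti_false_xy13, smul_mul_smul_comm, exps, smul_smul,
    ← mul_assoc, coeff, starCoeff, Finset.prod_mul_distrib, Nat.cast_mul]
  ring_nf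

lemma starTrunc_xy13 {D : ℕ} {b : Fin n × Fin m → ℕ} (hb : ∀ p, b p ≤ D)
    (a c d : Fin n × Fin m → ℕ) :
    starTrunc D (xy13 n m a b) (xy13 n m c d) = starXY a b c d := by
  rw [starTrunc_apply, starXY,
    ← Finset.sum_subset (Iic_subset_Iic.2 fun p => inf_le_left.trans (hb p)) fun I _ hI => by
      rw [derMulti_mul_derMulti_xy13_eq_zero (mt mem_Iic.2 hI), smul_zero]]
  exact Finset.sum_congr rfl fun I hI =>
    starWeight_smul_derMulti_mul_derMulti_xy13 (mem_Iic.1 hI) a d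

lemma starCoeff_permBlocks (σ : Equiv.Perm (Fin n)) (b c I : Fin n × Fin m → ℕ) :
    starCoeff (permBlocks σ b) (permBlocks σ c) (permBlocks σ I) = starCoeff b c I := by
  simp only [starCoeff, permBlocks,
    prod_comp_permBlocks σ fun p => (b p).choose (I p) * (c p).descFactorial (I p),
    sum_comp_permBlocks σ I]

lemma starXY_permBlocks (σ : Equiv.Perm (Fin n)) (a b c d : Fin n × Fin m → ℕ) :
    starXY (permBlocks σ a) (permBlocks σ b) (permBlocks σ c) (permBlocks σ d)
      = rename (fun v : Var13 n m => ((σ v.1.1, v.1.2), v.2)) (starXY a b c d) := by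
  rw [starXY, starXY, map_sum]
  change ∑ I ∈ Iic (permBlocks σ (b ⊓ c)), _ = _
  rw [sum_Iic_permBlocks]
  refine Finset.sum_congr rfl fun I _ => ?_
  rw [map_smul, rename_xy13, starCoeff_permBlocks]
  rfl

lemma star13_sym13_xy13 (a b c d : Fin n × Fin m → ℕ) :
    star13 n m (sym13 n m (xy13 n m a b)) (sym13 n m (xy13 n m c d))
      = Polynomial.C ((n.factorial : ℚ))⁻¹ •
          ∑ ρ : Equiv.Perm (Fin n),
            sym13 n m (starXY a b (permBlocks ρ c) (permBlocks ρ d)) := by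
  rw [star13_eq_starTrunc, totalDegree_sym13_xy13, sym13_xy13, sym13_xy13]
  simp only [map_smul, map_sum, LinearMap.smul_apply, LinearMap.sum_apply, starTrunc_xy13,
    permBlocks_le_sum, implies_true]
  have reindex :
      ∑ τ : Equiv.Perm (Fin n), ∑ σ : Equiv.Perm (Fin n),
          starXY (permBlocks σ a) (permBlocks σ b) (permBlocks τ c) (permBlocks τ d)
        = ∑ ρ : Equiv.Perm (Fin n), ∑ σ : Equiv.Perm (Fin n),
            rename (fun v : Var13 n m => ((σ v.1.1, v.1.2), v.2))
              (starXY a b (permBlocks ρ c) (permBlocks ρ d)) := by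
    refine Finset.sum_comm.trans (Eq.trans (Finset.sum_congr rfl fun σ _ => ?_) Finset.sum_comm)
    rw [← Equiv.sum_comp (Equiv.mulLeft σ)]
    simp only [Equiv.coe_mulLeft, permBlocks_mul, starXY_permBlocks]
  simp only [← Finset.smul_sum]
  rw [reindex]
  simp only [sym13, Finset.smul_sum]

end QSym13

theorem statement13_general (n m : ℕ)
    (a b c d : Fin n × Fin m → ℕ) :
    star13 n m (sym13 n m (xy13 n m a b)) (sym13 n m (xy13 n m c d)) =
      Polynomial.C ((n.factorial : ℚ))⁻¹ •
        ∑ σ : Equiv.Perm (Fin n),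
          ∑ I ∈ Finset.univ.filter
              (fun I : (p : Fin n × Fin m) → Fin (b p + 1) =>
                ∀ p : Fin n × Fin m, (I p : ℕ) ≤ c (σ⁻¹ p.1, p.2)),
            (((∏ p : Fin n × Fin m,
                  (b p).choose (I p) * (c (σ⁻¹ p.1, p.2)).descFactorial (I p) : ℕ) :
                Polynomial ℚ) *
              Polynomial.X ^ (∑ p : Fin n × Fin m, (I p : ℕ))) •
              sym13 n m (xy13 n m
                (fun p => a p + c (σ⁻¹ p.1, p.2) - (I p : ℕ))
                (fun p => b p + d (σ⁻¹ p.1, p.2) - (I p : ℕ))) := by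
  rw [QSym13.star13_sym13_xy13]
  congr 1
  refine Finset.sum_congr rfl fun σ _ => ?_
  rw [QSym13.starXY, QSym13.sym13_sum_smul, ← sum_filter_fin_pi_eq_sum_Iic]
  rfl

/-- Product rule for the algebra `QSym_{A_n}(m)` of quantum symmetric functions of type
`A_n`:
`s(x^a y^b) ⋆ s(x^c y^d) = (1/n!) Σ_{σ,I} (∏ C(b,I)(σ(c))_I) ℏ^{|I|} s(x^{a+σ(c)-I} y^{b+σ(d)-I})`,
the inner sum over multi-indices `I ≤ b`, `I ≤ σ(c)` componentwise, with
`σ(c)(i,j) = c(σ⁻¹(i),j)`. -/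
theorem statement13 (n m : ℕ) (hn : 1 ≤ n) (hm : 1 ≤ m)
    (a b c d : Fin n × Fin m → ℕ) :
    star13 n m (sym13 n m (xy13 n m a b)) (sym13 n m (xy13 n m c d)) =
      Polynomial.C ((n.factorial : ℚ))⁻¹ •
        ∑ σ : Equiv.Perm (Fin n),
          ∑ I ∈ Finset.univ.filter
              (fun I : (p : Fin n × Fin m) → Fin (b p + 1) =>
                ∀ p : Fin n × Fin m, (I p : ℕ) ≤ c (σ⁻¹ p.1, p.2)),
            (((∏ p : Fin n × Fin m,
                  (b p).choose (I p) * (c (σ⁻¹ p.1, p.2)).descFactorial (I p) : ℕ) :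
                Polynomial ℚ) *
              Polynomial.X ^ (∑ p : Fin n × Fin m, (I p : ℕ))) •
              sym13 n m (xy13 n m
                (fun p => a p + c (σ⁻¹ p.1, p.2) - (I p : ℕ))
                (fun p => b p + d (σ⁻¹ p.1, p.2) - (I p : ℕ))) :=
  statement13_general n m a b c d
end
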